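/- arXiv:2512.11069 — 2 statements merged into one kernel-verified Lean document; each statement's English description precedes it below -/
import Mathlib

section
/- Let p be a prime, x, y ∈ Q with x ≠ 0, and let α ∈ Q_p have an infinite Ruban continued fraction expansion with partial quotients (a_n), where v_p(a_0) ≤ 0 and v_p(a_n) < 0 for all n ≥ 1. Define x_0 = x, y_0 = y and x_{n+1} = x_n a_n + y_n, y_{n+1} = x_n for all n ≥ 0. If v_p(x_{n+1}) ≥ v_p(x_n) + 1 for all n ≥ 0, then xα + y = 0, that is α = −y/x. -/
open scoped Classical

/-- The `p`-adic valuation on `ℚ_[p]`, with `vp p 0 = ⊤` (i.e. `v_p(0) = +∞`). -/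
noncomputable def vp (p : ℕ) [Fact p.Prime] (x : ℚ_[p]) : WithTop ℤ :=
  if x = 0 then ⊤ else (x.valuation : WithTop ℤ)

/-- `a ∈ ℤ[1/p]`, i.e. `a` is a rational whose denominator is a power of `p`. -/
def InZinvp (p : ℕ) (a : ℚ) : Prop := ∃ n : ℕ, ∃ m : ℤ, a * (p : ℚ) ^ n = m

/-- `a` is the Ruban floor of `α`: `a ∈ ℤ[1/p] ∩ [0, p)` and `v_p(α - a) ≥ 1`. -/
def IsRubanFloor (p : ℕ) [Fact p.Prime] (α : ℚ_[p]) (a : ℚ) : Prop :=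
  InZinvp p a ∧ 0 ≤ a ∧ a < p ∧ 1 ≤ vp p (α - (a : ℚ_[p]))

lemma vp_mul {p : ℕ} [Fact p.Prime] (a b : ℚ_[p]) : vp p (a * b) = vp p a + vp p b := by
  unfold vp
  by_cases ha : a = 0
  · simp [ha]
  by_cases hb : b = 0
  · simp [hb]
  rw [if_neg ha, if_neg hb, if_neg (mul_ne_zero ha hb), Padic.valuation_mul ha hb]
  push_cast; ring

lemma vp_add {p : ℕ} [Fact p.Prime] (a b : ℚ_[p]) :
    min (vp p a) (vp p b) ≤ vp p (a + b) := by
  unfold vp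
  by_cases ha : a = 0
  · simp [ha]
  by_cases hb : b = 0
  · simp [hb]
  by_cases hab : a + b = 0
  · simp [hab]
  rw [if_neg ha, if_neg hb, if_neg hab, ← WithTop.coe_min]
  exact_mod_cast Padic.le_valuation_add (p := p) hab

/-- `α` has an infinite Ruban continued fraction expansion with complete
quotients `A n` and partial quotients `a n`, with `v_p(a_0) ≤ 0` and `v_p(a_n) < 0`
for `n ≥ 1`.  If the sequences `x_{n+1} = x_n a_n + y_n`, `y_{n+1} = x_n` (with
`x_0 = x`, `y_0 = y`, `x ≠ 0`) satisfy `v_p(x_{n+1}) ≥ v_p(x_n) + 1` for all `n ≥ 0`,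
then `xα + y = 0`, i.e. `α = -y/x`. -/
theorem stmt8 (p : ℕ) [Fact p.Prime] (x y : ℚ) (hx : x ≠ 0)
    (α : ℚ_[p]) (A : ℕ → ℚ_[p]) (a : ℕ → ℚ)
    (hA0 : A 0 = α) (hfl : ∀ n, IsRubanFloor p (A n) (a n))
    (hinf : ∀ n, A n ≠ ((a n : ℚ) : ℚ_[p]))
    (hrec : ∀ n, A (n + 1) = (A n - ((a n : ℚ) : ℚ_[p]))⁻¹)
    (ha0 : vp p ((a 0 : ℚ) : ℚ_[p]) ≤ (0 : WithTop ℤ))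
    (han : ∀ n, 1 ≤ n → vp p ((a n : ℚ) : ℚ_[p]) < (0 : WithTop ℤ))
    (X Y : ℕ → ℚ) (hX0 : X 0 = x) (hY0 : Y 0 = y)
    (hXr : ∀ n, X (n + 1) = X n * a n + Y n) (hYr : ∀ n, Y (n + 1) = X n)
    (hgrow : ∀ n, vp p ((X n : ℚ) : ℚ_[p]) + 1 ≤ vp p ((X (n + 1) : ℚ) : ℚ_[p])) :
    (x : ℚ_[p]) * α + (y : ℚ_[p]) = 0 ∧ α = -((y : ℚ_[p]) / (x : ℚ_[p])) := by
  have hx' : (x : ℚ_[p]) ≠ 0 := by exact_mod_cast (Rat.cast_ne_zero (α := ℚ_[p])).mpr hx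
  set Z : ℕ → ℚ_[p] := fun n => (X n : ℚ_[p]) * A n + (Y n : ℚ_[p]) with hZ
  -- the partial-quotient remainders have valuation ≥ 1
  have hval : ∀ k, (1 : WithTop ℤ) ≤ vp p (A k - ((a k : ℚ) : ℚ_[p])) := fun k => (hfl k).2.2.2
  -- key recursion
  have key : ∀ k, Z k = Z (k + 1) * (A k - ((a k : ℚ) : ℚ_[p])) := by
    intro k
    have hd : A k - ((a k : ℚ) : ℚ_[p]) ≠ 0 := sub_ne_zero.mpr (hinf k)
    simp only [hZ, hrec k, hYr k, hXr k]
    push_cast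
    field_simp
    ring
  -- valuation of Z drops by at least 1 each step (going backwards)
  have hstep : ∀ k, vp p (Z (k + 1)) + 1 ≤ vp p (Z k) := by
    intro k
    rw [key k, vp_mul]
    exact add_le_add_right (hval k) _
  have hchain : ∀ n : ℕ, vp p (Z n) + (n : WithTop ℤ) ≤ vp p (Z 0) := by
    intro n
    induction n with
    | zero => simp
    | succ n ih =>
      calc vp p (Z (n + 1)) + ((n + 1 : ℕ) : WithTop ℤ)
          = (vp p (Z (n + 1)) + 1) + (n : WithTop ℤ) := by push_cast; abel
        _ ≤ vp p (Z n) + (n : WithTop ℤ) := add_le_add_left (hstep n) _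
        _ ≤ vp p (Z 0) := ih
  -- vp (X n) ≥ vp x + n
  have hXn : ∀ n : ℕ, vp p ((x : ℚ_[p])) + (n : WithTop ℤ) ≤ vp p ((X n : ℚ) : ℚ_[p]) := by
    intro n
    induction n with
    | zero => simp [hX0]
    | succ n ih =>
      calc vp p ((x : ℚ_[p])) + ((n + 1 : ℕ) : WithTop ℤ)
          = (vp p ((x : ℚ_[p])) + (n : WithTop ℤ)) + 1 := by push_cast; abel
        _ ≤ vp p ((X n : ℚ) : ℚ_[p]) + 1 := add_le_add_left ih _
        _ ≤ vp p ((X (n + 1) : ℚ) : ℚ_[p]) := hgrow n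
  -- lower bound on vp (Z n)
  have hZn : ∀ n : ℕ, vp p ((x : ℚ_[p])) + (n : WithTop ℤ) + 1 ≤ vp p (Z n) := by
    intro n
    have hZeq : Z n = ((X (n + 1) : ℚ) : ℚ_[p]) +
        ((X n : ℚ) : ℚ_[p]) * (A n - ((a n : ℚ) : ℚ_[p])) := by
      simp only [hZ, hXr n]
      push_cast
      ring
    rw [hZeq]
    refine le_trans ?_ (vp_add _ _)
    refine le_min ?_ ?_
    · calc vp p ((x : ℚ_[p])) + (n : WithTop ℤ) + 1
          = vp p ((x : ℚ_[p])) + ((n + 1 : ℕ) : WithTop ℤ) := by push_cast; abel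
        _ ≤ _ := hXn (n + 1)
    · rw [vp_mul]
      exact add_le_add (hXn n) (hval n)
  -- hence vp (Z 0) is larger than any integer, so Z 0 = 0
  have hbig : ∀ n : ℕ, vp p ((x : ℚ_[p])) + (n : WithTop ℤ) + 1 + (n : WithTop ℤ)
      ≤ vp p (Z 0) := fun n =>
    le_trans (add_le_add_left (hZn n) _) (hchain n)
  have hZ0 : Z 0 = 0 := by
    by_contra h0
    have hvx : vp p ((x : ℚ_[p])) = ((x : ℚ_[p]).valuation : WithTop ℤ) := if_neg hx'
    have hvz : vp p (Z 0) = ((Z 0).valuation : WithTop ℤ) := if_neg h0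
    set v := (x : ℚ_[p]).valuation
    set w := (Z 0).valuation
    set n := (w - v).toNat + 1 with hn
    have := hbig n
    rw [hvx, hvz] at this
    have hle : v + (n : ℤ) + 1 + (n : ℤ) ≤ w := by exact_mod_cast this
    have hnn : w - v ≤ (n : ℤ) := le_trans (Int.self_le_toNat _) (by push_cast [hn]; omega)
    omega
  have hmain : (x : ℚ_[p]) * α + (y : ℚ_[p]) = 0 := by
    simpa [hZ, hX0, hY0, hA0] using hZ0
  refine ⟨hmain, ?_⟩
  field_simp
  linear_combination hmain
end

section
/- Let p be an odd prime, and let D ⊆ pZ_p be the set of α ∈ pZ_p whose MR expansion is infinite (the complement of D in pZ_p is contained in Q, hence is μ-null). Define T : D → pZ_p by T(α) = T_s(T_t(α)), where T_t(x) = 1/x − t(1/x) and T_s(x) = 1/x − s(1/x); equivalently, if the MR expansion of α is [0, a_1, a_2, a_3, …], then the MR expansion of T(α) is [0, a_3, a_4, …]. Then T preserves the Haar measure μ: for every Borel set A ⊆ pZ_p, μ(T^{−1}(A)) = μ(A). -/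
open scoped Classical
open MeasureTheory

/-- `a = s(α)`: the unique element of `ℤ[1/p] ∩ (-p/2, p/2)` with `v_p(α - a) ≥ 1`. -/
def IsSFloor (p : ℕ) [Fact p.Prime] (α : ℚ_[p]) (a : ℚ) : Prop :=
  InZinvp p a ∧ -((p : ℚ) / 2) < a ∧ a < (p : ℚ) / 2 ∧ 1 ≤ vp p (α - (a : ℚ_[p]))

/-- `a = t(α)`: the unique element of `ℤ[1/p] ∩ (-1/2, 1/2)` with `v_p(α - a) ≥ 0`. -/
def IsTFloor (p : ℕ) [Fact p.Prime] (α : ℚ_[p]) (a : ℚ) : Prop :=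
  InZinvp p a ∧ -(1 / 2 : ℚ) < a ∧ a < (1 / 2 : ℚ) ∧ 0 ≤ vp p (α - (a : ℚ_[p]))

/-- The Browkin floor function `s` (for odd `p` it exists and is unique). -/
noncomputable def sFloor (p : ℕ) [Fact p.Prime] (α : ℚ_[p]) : ℚ :=
  if h : ∃ a : ℚ, IsSFloor p α a then h.choose else 0

/-- The Browkin floor function `t` (for odd `p` it exists and is unique). -/
noncomputable def tFloor (p : ℕ) [Fact p.Prime] (α : ℚ_[p]) : ℚ :=
  if h : ∃ a : ℚ, IsTFloor p α a then h.choose else 0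


section MRAux

open Metric

variable (p : ℕ) [Fact p.Prime]

lemma vp_le_iff (x : ℚ_[p]) (j : ℤ) :
    (j : WithTop ℤ) ≤ vp p x ↔ ‖x‖ ≤ (p : ℝ) ^ (-j) := by
  have hp1 : (1 : ℝ) < p := by exact_mod_cast (Fact.out : p.Prime).one_lt
  unfold vp
  split_ifs with h
  · simp only [h, norm_zero]
    exact iff_of_true le_top (by positivity)
  · rw [Padic.norm_eq_zpow_neg_valuation h]
    rw [show ((x.valuation : WithTop ℤ) = ((x.valuation : ℤ) : WithTop ℤ)) from rfl,
      WithTop.coe_le_coe]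
    rw [zpow_le_zpow_iff_right₀ hp1, neg_le_neg_iff]

lemma InZinvp.sub' {a b : ℚ} (ha : InZinvp p a) (hb : InZinvp p b) : InZinvp p (a - b) := by
  obtain ⟨n, m, hm⟩ := ha
  obtain ⟨n', m', hm'⟩ := hb
  refine ⟨n + n', m * (p:ℤ)^n' - m' * (p:ℤ)^n, ?_⟩
  push_cast
  rw [pow_add]
  calc (a - b) * ((p:ℚ)^n * (p:ℚ)^n') = (a * (p:ℚ)^n) * (p:ℚ)^n' - (b * (p:ℚ)^n') * (p:ℚ)^n := by
        ring
    _ = (m:ℚ) * (p:ℚ)^n' - (m':ℚ) * (p:ℚ)^n := by rw [hm, hm']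

lemma InZinvp.eq_int_mul {a : ℚ} (ha : InZinvp p a) (j : ℕ)
    (h : ‖(a : ℚ_[p])‖ ≤ (p : ℝ) ^ (-(j:ℤ))) : ∃ m : ℤ, a = (p:ℚ) ^ j * m := by
  rcases eq_or_ne a 0 with rfl | ha0
  · exact ⟨0, by simp⟩
  have hp1 : (1 : ℝ) < p := by exact_mod_cast (Fact.out : p.Prime).one_lt
  have hpq : (p : ℚ) ≠ 0 := by
    exact_mod_cast (Fact.out : p.Prime).ne_zero
  obtain ⟨n, m, hm⟩ := ha
  have hval : (j : ℤ) ≤ padicValRat p a := by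
    rw [Padic.eq_padicNorm, padicNorm.eq_zpow_of_nonzero ha0] at h
    have h' : (p:ℝ) ^ (-padicValRat p a) ≤ (p:ℝ) ^ (-(j:ℤ)) := by
      push_cast at h
      exact_mod_cast h
    have := (zpow_le_zpow_iff_right₀ hp1).mp h'
    omega
  have hm0 : m ≠ 0 := by
    rintro rfl
    simp only [Int.cast_zero, mul_eq_zero] at hm
    rcases hm with h1 | h1
    · exact ha0 h1
    · exact (pow_ne_zero n hpq) h1
  have hvm : (j : ℤ) + n ≤ padicValInt p m := by
    have h2 : padicValRat p m = padicValRat p a + n := by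
      rw [← hm, padicValRat.mul ha0 (pow_ne_zero n hpq),
        padicValRat.pow _]
      simp [padicValRat.self (Fact.out : p.Prime).one_lt]
    rw [padicValRat.of_int] at h2
    omega
  have hdvd : (p : ℤ) ^ (j + n) ∣ m := by
    rw [padicValInt_dvd_iff]
    right
    omega
  obtain ⟨c, hc⟩ := hdvd
  refine ⟨c, ?_⟩
  have hpn : ((p:ℚ)^n) ≠ 0 := pow_ne_zero n hpq
  have key : a * (p:ℚ)^n = ((p:ℚ)^j * c) * (p:ℚ)^n := by
    rw [hm, hc]
    push_cast [pow_add]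
    ring
  exact mul_right_cancel₀ hpn key

lemma mr_exists_floor (hodd : Odd p) (α : ℚ_[p]) (j : ℕ) :
    ∃ a : ℚ, InZinvp p a ∧ |a| < (p:ℚ)^j / 2 ∧
      ‖α - (a : ℚ_[p])‖ ≤ (p : ℝ) ^ (-(j:ℤ)) := by
  have hp1R : (1 : ℝ) < p := by exact_mod_cast (Fact.out : p.Prime).one_lt
  have hpq : (p : ℚ) ≠ 0 := by exact_mod_cast (Fact.out : p.Prime).ne_zero
  have hppos : (0:ℚ) < (p:ℚ) := by exact_mod_cast (Fact.out : p.Prime).pos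
  obtain ⟨n, hn⟩ : ∃ n : ℕ, ‖α‖ ≤ (p : ℝ) ^ (n:ℕ) := by
    obtain ⟨n, hn⟩ := pow_unbounded_of_one_lt ‖α‖ hp1R
    exact ⟨n, hn.le⟩
  have hz : ‖(p : ℚ_[p]) ^ n * α‖ ≤ 1 := by
    rw [norm_mul, Padic.norm_p_pow]
    calc (p:ℝ)^(-(n:ℤ)) * ‖α‖ ≤ (p:ℝ)^(-(n:ℤ)) * (p:ℝ)^(n:ℕ) := by
          apply mul_le_mul_of_nonneg_left hn (by positivity)
      _ = 1 := by
          rw [← zpow_natCast (p:ℝ) n, ← zpow_add₀ (by positivity : (p:ℝ) ≠ 0)]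
          simp
  set z : ℤ_[p] := ⟨(p : ℚ_[p]) ^ n * α, hz⟩ with hzdef
  set r : ℕ := z.appr (n + j) with hrdef
  have hr : ‖z - (r:ℤ_[p])‖ ≤ (p:ℝ) ^ (-((n+j : ℕ):ℤ)) :=
    (PadicInt.norm_le_pow_iff_mem_span_pow _ _).mpr (PadicInt.appr_spec (n+j) z)
  have hrq : ‖(p : ℚ_[p]) ^ n * α - (r : ℚ_[p])‖ ≤ (p:ℝ) ^ (-((n+j : ℕ):ℤ)) := by
    have : ((z - (r:ℤ_[p]) : ℤ_[p]) : ℚ_[p]) = (p : ℚ_[p]) ^ n * α - (r : ℚ_[p]) := by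
      push_cast [hzdef]
      rfl
    rw [← this, PadicInt.padic_norm_e_of_padicInt]
    exact hr
  have hstep : ‖α - (((r:ℚ) / (p:ℚ)^n : ℚ) : ℚ_[p])‖ ≤ (p:ℝ) ^ (-(j:ℤ)) := by
    have hcast : (((r:ℚ) / (p:ℚ)^n : ℚ) : ℚ_[p]) = (r : ℚ_[p]) / (p:ℚ_[p])^n := by push_cast; ring
    have hpn0 : ((p:ℚ_[p])^n) ≠ 0 := by
      apply pow_ne_zero
      exact_mod_cast (Nat.cast_ne_zero (R := ℚ_[p])).mpr (Fact.out : p.Prime).ne_zero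
    have h2 : α - (r : ℚ_[p]) / (p:ℚ_[p])^n = ((p : ℚ_[p]) ^ n * α - (r : ℚ_[p])) / (p:ℚ_[p])^n := by
      field_simp
    rw [hcast, h2, norm_div, Padic.norm_p_pow]
    rw [div_le_iff₀ (by positivity)]
    calc ‖(p : ℚ_[p]) ^ n * α - (r : ℚ_[p])‖ ≤ (p:ℝ) ^ (-((n+j : ℕ):ℤ)) := hrq
      _ = (p:ℝ) ^ (-(j:ℤ)) * (p:ℝ)^(-(n:ℤ)) := by
          rw [← zpow_add₀ (by positivity : (p:ℝ) ≠ 0)]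
          congr 1
          push_cast
          ring
  set k : ℤ := round ((r:ℚ) / (p:ℚ)^(n+j)) with hkdef
  set a : ℚ := (r:ℚ) / (p:ℚ)^n - k * (p:ℚ)^j with hadef
  refine ⟨a, ⟨n, (r : ℤ) - k * (p:ℤ)^(j+n), ?_⟩, ?_, ?_⟩
  · rw [hadef]
    push_cast [pow_add]
    field_simp
  · have ha2 : a = (p:ℚ)^j * ((r:ℚ) / (p:ℚ)^(n+j) - k) := by
      rw [hadef, pow_add]
      field_simp
    have hb : |(r:ℚ) / (p:ℚ)^(n+j) - k| ≤ 1/2 := abs_sub_round _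
    have hne : |(r:ℚ) / (p:ℚ)^(n+j) - k| ≠ 1/2 := by
      intro heq
      have h2 : (r:ℚ) / (p:ℚ)^(n+j) - k = 1/2 ∨ (r:ℚ) / (p:ℚ)^(n+j) - k = -(1/2) := by
        rcases abs_eq (by norm_num : (0:ℚ) ≤ 1/2) |>.mp heq with h | h
        · exact Or.inl h
        · exact Or.inr h
      have hodd' : Odd ((p:ℤ)^(n+j)) := hodd.natCast (R := ℤ) |>.pow
      rcases h2 with h | h
      · have h3 : 2 * (r:ℚ) = (p:ℚ)^(n+j) * (2*k+1) := by
          field_simp at h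
          linear_combination h
        have hZ : (2 * (r:ℤ)) = (p:ℤ)^(n+j) * (2*k+1) := by exact_mod_cast h3
        have h4 : Even ((p:ℤ)^(n+j) * (2*k+1)) := by
          rw [← hZ]; exact ⟨r, by ring⟩
        rcases Int.even_mul.mp h4 with h' | h'
        · exact (Int.not_odd_iff_even.mpr h') hodd'
        · exact (Int.not_odd_iff_even.mpr h') ⟨k, by ring⟩
      · have h3 : 2 * (r:ℚ) = (p:ℚ)^(n+j) * (2*k-1) := by
          field_simp at h
          linear_combination h
        have hZ : (2 * (r:ℤ)) = (p:ℤ)^(n+j) * (2*k-1) := by exact_mod_cast h3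
        have h4 : Even ((p:ℤ)^(n+j) * (2*k-1)) := by
          rw [← hZ]; exact ⟨r, by ring⟩
        rcases Int.even_mul.mp h4 with h' | h'
        · exact (Int.not_odd_iff_even.mpr h') hodd'
        · exact (Int.not_odd_iff_even.mpr h') ⟨k-1, by ring⟩
    have hblt : |(r:ℚ) / (p:ℚ)^(n+j) - k| < 1/2 := lt_of_le_of_ne hb hne
    rw [ha2, abs_mul, abs_of_pos (by positivity : (0:ℚ) < (p:ℚ)^j)]
    calc (p:ℚ)^j * |(r:ℚ) / (p:ℚ)^(n+j) - k| < (p:ℚ)^j * (1/2) := by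
          apply mul_lt_mul_of_pos_left hblt (by positivity)
      _ = (p:ℚ)^j / 2 := by ring
  · have hsplit : α - (a : ℚ_[p]) =
        (α - (((r:ℚ) / (p:ℚ)^n : ℚ) : ℚ_[p])) + (((k : ℚ) * (p:ℚ)^j : ℚ) : ℚ_[p]) := by
      rw [hadef]
      push_cast
      ring
    rw [hsplit]
    refine le_trans (Padic.nonarchimedean _ _) (max_le hstep ?_)
    have hc : (((k : ℚ) * (p:ℚ)^j : ℚ) : ℚ_[p]) = (k : ℚ_[p]) * (p:ℚ_[p])^j := by push_cast; ring
    rw [hc, norm_mul, Padic.norm_p_pow]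
    calc ‖(k : ℚ_[p])‖ * (p:ℝ)^(-(j:ℤ)) ≤ 1 * (p:ℝ)^(-(j:ℤ)) := by
          apply mul_le_mul_of_nonneg_right (Padic.norm_int_le_one k) (by positivity)
      _ = (p:ℝ)^(-(j:ℤ)) := one_mul _

lemma mr_floor_unique (hodd : Odd p) {α : ℚ_[p]} {a b : ℚ} {j : ℕ}
    (haz : InZinvp p a) (hbz : InZinvp p b)
    (ha : |a| < (p:ℚ)^j / 2) (hb : |b| < (p:ℚ)^j / 2)
    (hna : ‖α - (a : ℚ_[p])‖ ≤ (p : ℝ) ^ (-(j:ℤ)))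
    (hnb : ‖α - (b : ℚ_[p])‖ ≤ (p : ℝ) ^ (-(j:ℤ))) :
    a = b := by
  have hppos : (0:ℚ) < (p:ℚ) := by exact_mod_cast (Fact.out : p.Prime).pos
  have hnorm : ‖((a - b : ℚ) : ℚ_[p])‖ ≤ (p : ℝ) ^ (-(j:ℤ)) := by
    have h1 : ((a - b : ℚ) : ℚ_[p]) = (α - (b:ℚ_[p])) + -(α - (a:ℚ_[p])) := by push_cast; ring
    rw [h1]
    refine le_trans (Padic.nonarchimedean _ _) (max_le hnb ?_)
    rw [norm_neg]; exact hna
  obtain ⟨m, hm⟩ := (InZinvp.sub' p haz hbz).eq_int_mul p j hnorm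
  have habs : |a - b| < (p:ℚ)^j := by
    calc |a - b| ≤ |a| + |b| := abs_sub _ _
      _ < (p:ℚ)^j / 2 + (p:ℚ)^j / 2 := by linarith
      _ = (p:ℚ)^j := by ring
  rw [hm, abs_mul, abs_of_pos (by positivity : (0:ℚ) < (p:ℚ)^j)] at habs
  have h5 : |(m:ℚ)| < 1 := by
    have hpj : (0:ℚ) < (p:ℚ)^j := by positivity
    nlinarith [abs_nonneg ((m:ℚ))]
  have h6 : m = 0 := by
    have h1 : |m| < 1 := by exact_mod_cast h5
    exact Int.abs_lt_one_iff.mp h1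
  rw [h6] at hm
  simp at hm
  linarith [hm]

lemma isTFloor_iff (α : ℚ_[p]) (a : ℚ) :
    IsTFloor p α a ↔ InZinvp p a ∧ |a| < 1/2 ∧ ‖α - (a:ℚ_[p])‖ ≤ (p:ℝ)^(-(0:ℤ)) := by
  rw [IsTFloor, abs_lt]
  constructor
  · rintro ⟨h1, h2, h3, h4⟩
    refine ⟨h1, ⟨h2, h3⟩, ?_⟩
    have := (vp_le_iff p (α - (a:ℚ_[p])) 0).mp (by exact_mod_cast h4)
    exact this
  · rintro ⟨h1, ⟨h2, h3⟩, h4⟩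
    refine ⟨h1, h2, h3, ?_⟩
    have := (vp_le_iff p (α - (a:ℚ_[p])) 0).mpr h4
    exact_mod_cast this

lemma isSFloor_iff (α : ℚ_[p]) (a : ℚ) :
    IsSFloor p α a ↔ InZinvp p a ∧ |a| < (p:ℚ)^(1:ℕ)/2 ∧ ‖α - (a:ℚ_[p])‖ ≤ (p:ℝ)^(-(1:ℤ)) := by
  rw [IsSFloor, abs_lt, pow_one]
  constructor
  · rintro ⟨h1, h2, h3, h4⟩
    refine ⟨h1, ⟨h2, h3⟩, ?_⟩
    have := (vp_le_iff p (α - (a:ℚ_[p])) 1).mp (by exact_mod_cast h4)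
    exact this
  · rintro ⟨h1, ⟨h2, h3⟩, h4⟩
    refine ⟨h1, h2, h3, ?_⟩
    have := (vp_le_iff p (α - (a:ℚ_[p])) 1).mpr h4
    exact_mod_cast this

lemma isTFloor_tFloor (hodd : Odd p) (α : ℚ_[p]) : IsTFloor p α (tFloor p α) := by
  have hex : ∃ a : ℚ, IsTFloor p α a := by
    obtain ⟨a, h1, h2, h3⟩ := mr_exists_floor p hodd α 0
    exact ⟨a, (isTFloor_iff p α a).mpr ⟨h1, by simpa using h2, h3⟩⟩
  rw [tFloor, dif_pos hex]
  exact hex.choose_spec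

lemma isSFloor_sFloor (hodd : Odd p) (α : ℚ_[p]) : IsSFloor p α (sFloor p α) := by
  have hex : ∃ a : ℚ, IsSFloor p α a := by
    obtain ⟨a, h1, h2, h3⟩ := mr_exists_floor p hodd α 1
    exact ⟨a, (isSFloor_iff p α a).mpr ⟨h1, h2, h3⟩⟩
  rw [sFloor, dif_pos hex]
  exact hex.choose_spec

lemma tFloor_eq (hodd : Odd p) {α : ℚ_[p]} {a : ℚ} (h : IsTFloor p α a) :
    tFloor p α = a := by
  obtain ⟨h1, h2, h3⟩ := (isTFloor_iff p α a).mp h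
  obtain ⟨g1, g2, g3⟩ := (isTFloor_iff p α _).mp (isTFloor_tFloor p hodd α)
  exact mr_floor_unique p hodd (j := 0) g1 h1 (by simpa using g2) (by simpa using h2) g3 h3

lemma sFloor_eq (hodd : Odd p) {α : ℚ_[p]} {a : ℚ} (h : IsSFloor p α a) :
    sFloor p α = a := by
  obtain ⟨h1, h2, h3⟩ := (isSFloor_iff p α a).mp h
  obtain ⟨g1, g2, g3⟩ := (isSFloor_iff p α _).mp (isSFloor_sFloor p hodd α)
  exact mr_floor_unique p hodd (j := 1) g1 h1 g2 h2 g3 h3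

end MRAux

/-- The floor used by the MR algorithm at step `n`: `s` for even `n`, `t` for odd `n`. -/
noncomputable def mrFloor (p : ℕ) [Fact p.Prime] (n : ℕ) (x : ℚ_[p]) : ℚ :=
  if Even n then sFloor p x else tFloor p x

/-- The complete quotients `α_n` of the MR algorithm:
`α_0 = α`, `α_{n+1} = 1/(α_n - a_n)` with `a_n = s(α_n)` for even `n`, `t(α_n)` for
odd `n`. -/
noncomputable def mrCQ (p : ℕ) [Fact p.Prime] (α : ℚ_[p]) : ℕ → ℚ_[p]
  | 0 => α
  | n + 1 => (mrCQ p α n - ((mrFloor p n (mrCQ p α n) : ℚ) : ℚ_[p]))⁻¹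

/-- The partial quotients `a_n` of the MR expansion of `α`. -/
noncomputable def mrPQ (p : ℕ) [Fact p.Prime] (α : ℚ_[p]) (n : ℕ) : ℚ :=
  mrFloor p n (mrCQ p α n)

/-- The MR expansion of `α` reaches step `j`: `α_i ≠ a_i` for all `i < j`. -/
def MRReaches (p : ℕ) [Fact p.Prime] (α : ℚ_[p]) (j : ℕ) : Prop :=
  ∀ i, i < j → mrCQ p α i ≠ ((mrPQ p α i : ℚ) : ℚ_[p])

/-- The MR expansion of `α` is infinite: `α_n ≠ a_n` for all `n`. -/
def MRInfinite (p : ℕ) [Fact p.Prime] (α : ℚ_[p]) : Prop :=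
  ∀ n, mrCQ p α n ≠ ((mrPQ p α n : ℚ) : ℚ_[p])

/-- `T_t(x) = 1/x - t(1/x)`. -/
noncomputable def Tt (p : ℕ) [Fact p.Prime] (x : ℚ_[p]) : ℚ_[p] :=
  x⁻¹ - ((tFloor p x⁻¹ : ℚ) : ℚ_[p])

/-- `T_s(x) = 1/x - s(1/x)`. -/
noncomputable def Ts (p : ℕ) [Fact p.Prime] (x : ℚ_[p]) : ℚ_[p] :=
  x⁻¹ - ((sFloor p x⁻¹ : ℚ) : ℚ_[p])

/-- The two-step shift `T = T_s ∘ T_t` of the MR algorithm. -/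
noncomputable def Tmap (p : ℕ) [Fact p.Prime] (x : ℚ_[p]) : ℚ_[p] :=
  Ts p (Tt p x)

open Metric TopologicalSpace
open scoped ENNReal

section MRBalls
variable (p : ℕ) [Fact p.Prime]

lemma mr_norm_p_zpow (k : ℤ) : ‖(p:ℚ_[p])^k‖ = (p:ℝ)^(-k) := by
  have h0 : (p:ℚ_[p]) ≠ 0 := by
    exact_mod_cast (Nat.cast_ne_zero (R := ℚ_[p])).mpr (Fact.out : p.Prime).ne_zero
  rw [norm_zpow, Padic.norm_p, inv_zpow, ← zpow_neg]

lemma mr_cball_cover (k : ℤ) :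
    closedBall (0:ℚ_[p]) ((p:ℝ)^(-k)) =
      ⋃ i ∈ Finset.range p, closedBall ((i:ℚ_[p]) * (p:ℚ_[p])^k) ((p:ℝ)^(-(k+1))) := by
  have hp0 : (p:ℚ_[p]) ≠ 0 := by
    exact_mod_cast (Nat.cast_ne_zero (R := ℚ_[p])).mpr (Fact.out : p.Prime).ne_zero
  have hp1R : (1:ℝ) < p := by exact_mod_cast (Fact.out : p.Prime).one_lt
  ext x
  simp only [Set.mem_iUnion, Finset.mem_range, mem_closedBall, dist_eq_norm, sub_zero,
    exists_prop]
  constructor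
  · intro hx
    have hy : ‖x * (p:ℚ_[p])^(-k)‖ ≤ 1 := by
      rw [norm_mul, mr_norm_p_zpow, neg_neg]
      calc ‖x‖ * (p:ℝ)^k ≤ (p:ℝ)^(-k) * (p:ℝ)^k := by
            apply mul_le_mul_of_nonneg_right hx (by positivity)
        _ = 1 := by rw [← zpow_add₀ (by positivity : (p:ℝ) ≠ 0)]; simp
    set z : ℤ_[p] := ⟨x * (p:ℚ_[p])^(-k), hy⟩ with hz
    refine ⟨z.appr 1, by simpa using z.appr_lt 1, ?_⟩
    have hspec : ‖z - ((z.appr 1 : ℤ) : ℤ_[p])‖ ≤ (p:ℝ)^(-(1:ℤ)) := by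
      have := (PadicInt.norm_le_pow_iff_mem_span_pow (z - ((z.appr 1 : ℤ):ℤ_[p])) 1).mpr ?_
      · exact_mod_cast this
      · have := PadicInt.appr_spec 1 z
        exact_mod_cast this
    have hcast : ((z - ((z.appr 1 : ℤ):ℤ_[p]) : ℤ_[p]) : ℚ_[p])
        = x * (p:ℚ_[p])^(-k) - (z.appr 1 : ℚ_[p]) := by
      push_cast [hz]
      rfl
    have hkey : x - (z.appr 1 : ℚ_[p]) * (p:ℚ_[p])^k
        = (x * (p:ℚ_[p])^(-k) - (z.appr 1 : ℚ_[p])) * (p:ℚ_[p])^k := by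
      rw [sub_mul, mul_assoc, ← zpow_add₀ hp0]
      simp
    rw [hkey, norm_mul, mr_norm_p_zpow]
    calc ‖x * (p:ℚ_[p])^(-k) - (z.appr 1 : ℚ_[p])‖ * (p:ℝ)^(-k)
        ≤ (p:ℝ)^(-(1:ℤ)) * (p:ℝ)^(-k) := by
          apply mul_le_mul_of_nonneg_right _ (by positivity)
          rw [← hcast, PadicInt.padic_norm_e_of_padicInt]
          exact hspec
      _ = (p:ℝ)^(-(k+1)) := by
          rw [← zpow_add₀ (by positivity : (p:ℝ) ≠ 0)]
          congr 1
          ring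
  · rintro ⟨i, hi, hx⟩
    have h1 : ‖(i:ℚ_[p]) * (p:ℚ_[p])^k‖ ≤ (p:ℝ)^(-k) := by
      rw [norm_mul, mr_norm_p_zpow]
      calc ‖((i:ℕ):ℚ_[p])‖ * (p:ℝ)^(-k) ≤ 1 * (p:ℝ)^(-k) := by
            apply mul_le_mul_of_nonneg_right _ (by positivity)
            exact_mod_cast Padic.norm_int_le_one (i:ℤ)
        _ = (p:ℝ)^(-k) := one_mul _
    calc ‖x‖ = ‖(x - (i:ℚ_[p]) * (p:ℚ_[p])^k) + (i:ℚ_[p]) * (p:ℚ_[p])^k‖ := by ring_nf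
      _ ≤ max ‖x - (i:ℚ_[p]) * (p:ℚ_[p])^k‖ ‖(i:ℚ_[p]) * (p:ℚ_[p])^k‖ :=
          Padic.nonarchimedean _ _
      _ ≤ (p:ℝ)^(-k) := by
          apply max_le _ h1
          calc ‖x - (i:ℚ_[p]) * (p:ℚ_[p])^k‖ ≤ (p:ℝ)^(-(k+1)) := hx
            _ ≤ (p:ℝ)^(-k) := by
                exact (zpow_le_zpow_iff_right₀ hp1R).mpr (by omega)

lemma mr_cball_disj (k : ℤ) {i j : ℕ} (hi : i < p) (hj : j < p) (hij : i ≠ j) :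
    Disjoint (closedBall ((i:ℚ_[p]) * (p:ℚ_[p])^k) ((p:ℝ)^(-(k+1))))
      (closedBall ((j:ℚ_[p]) * (p:ℚ_[p])^k) ((p:ℝ)^(-(k+1)))) := by
  have hp1R : (1:ℝ) < p := by exact_mod_cast (Fact.out : p.Prime).one_lt
  rw [Set.disjoint_left]
  intro x hx hx'
  simp only [mem_closedBall, dist_eq_norm] at hx hx'
  have hdiff : ‖((i:ℚ_[p]) - j) * (p:ℚ_[p])^k‖ ≤ (p:ℝ)^(-(k+1)) := by
    have : ((i:ℚ_[p]) - j) * (p:ℚ_[p])^k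
        = -(x - (i:ℚ_[p]) * (p:ℚ_[p])^k) + (x - (j:ℚ_[p]) * (p:ℚ_[p])^k) := by ring
    rw [this]
    refine le_trans (Padic.nonarchimedean _ _) (max_le ?_ hx')
    rw [norm_neg]; exact hx
  rw [norm_mul, mr_norm_p_zpow] at hdiff
  have h2 : ‖((i:ℚ_[p]) - j)‖ ≤ (p:ℝ)^(-(1:ℤ)) := by
    have hpk : (0:ℝ) < (p:ℝ)^(-k) := by positivity
    rw [← mul_le_mul_iff_of_pos_right hpk]
    calc ‖((i:ℚ_[p]) - j)‖ * (p:ℝ)^(-k) ≤ (p:ℝ)^(-(k+1)) := hdiff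
      _ = (p:ℝ)^(-(1:ℤ)) * (p:ℝ)^(-k) := by
          rw [← zpow_add₀ (by positivity : (p:ℝ) ≠ 0)]; congr 1; ring
  have h3 : ‖(((i:ℤ) - j : ℤ) : ℚ_[p])‖ < 1 := by
    push_cast
    calc ‖((i:ℚ_[p]) - j)‖ ≤ (p:ℝ)^(-(1:ℤ)) := h2
      _ < 1 := by
          rw [zpow_neg_one]
          rw [inv_lt_one_iff₀]
          right; exact hp1R
  have hdvd : (p:ℤ) ∣ (i:ℤ) - j := Padic.norm_intCast_lt_one_iff.mp h3
  have hne : (i:ℤ) - j ≠ 0 := by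
    simp only [ne_eq, sub_eq_zero]
    exact_mod_cast hij
  have habs : |(i:ℤ) - j| < p := by
    rw [abs_lt]
    omega
  have hle : (p:ℤ) ≤ |(i:ℤ) - j| := Int.le_of_dvd (abs_pos.mpr hne) ((dvd_abs _ _).mpr hdvd)
  omega
end MRBalls

section MRBalls2
variable (p : ℕ) [Fact p.Prime]

lemma mr_isPiSystem :
    IsPiSystem {S : Set ℚ_[p] | ∃ c : ℚ_[p], ∃ m : ℤ, S = closedBall c ((p:ℝ)^(-m))} := by
  have hp1R : (1:ℝ) < p := by exact_mod_cast (Fact.out : p.Prime).one_lt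
  rintro s ⟨c1, m1, rfl⟩ t ⟨c2, m2, rfl⟩ hne
  obtain ⟨z, hz1, hz2⟩ := hne
  rw [IsUltrametricDist.closedBall_eq_of_mem hz1, IsUltrametricDist.closedBall_eq_of_mem hz2]
  refine ⟨z, max m1 m2, ?_⟩
  have hmin : (p:ℝ)^(-(max m1 m2)) = min ((p:ℝ)^(-m1)) ((p:ℝ)^(-m2)) := by
    rcases le_total m1 m2 with h | h
    · rw [max_eq_right h, min_eq_right]
      exact (zpow_le_zpow_iff_right₀ hp1R).mpr (by omega)
    · rw [max_eq_left h, min_eq_left]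
      exact (zpow_le_zpow_iff_right₀ hp1R).mpr (by omega)
  ext x
  simp only [Set.mem_inter_iff, mem_closedBall, hmin, le_min_iff]

lemma mr_isBasis :
    IsTopologicalBasis {S : Set ℚ_[p] | ∃ c : ℚ_[p], ∃ m : ℤ, S = closedBall c ((p:ℝ)^(-m))} := by
  have hp1R : (1:ℝ) < p := by exact_mod_cast (Fact.out : p.Prime).one_lt
  apply isTopologicalBasis_of_isOpen_of_nhds
  · rintro u ⟨c, m, rfl⟩
    exact IsUltrametricDist.isOpen_closedBall c (by positivity : ((p:ℝ)^(-m)) ≠ 0)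
  · intro a u ha hu
    obtain ⟨ε, hε, hball⟩ := Metric.isOpen_iff.mp hu a ha
    obtain ⟨m, hm⟩ := pow_unbounded_of_one_lt ε⁻¹ hp1R
    refine ⟨closedBall a ((p:ℝ)^(-(m:ℤ))), ⟨a, m, rfl⟩, mem_closedBall_self (by positivity), ?_⟩
    refine subset_trans (closedBall_subset_ball ?_) hball
    rw [zpow_neg, zpow_natCast]
    rw [inv_lt_comm₀ (by positivity) hε]
    exact hm
end MRBalls2

section MRMeas
variable (p : ℕ) [Fact p.Prime] [MeasurableSpace ℚ_[p]] [BorelSpace ℚ_[p]]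
variable (μ : Measure ℚ_[p]) [μ.IsAddHaarMeasure]

lemma mr_meas_translate (c : ℚ_[p]) (r : ℝ) : μ (closedBall c r) = μ (closedBall 0 r) := by
  have := measure_preimage_add μ c (closedBall c r)
  rw [← this]
  congr 1
  ext x
  simp [mem_closedBall, dist_eq_norm]

lemma mr_meas_step (k : ℤ) :
    μ (closedBall (0:ℚ_[p]) ((p:ℝ)^(-k))) = p * μ (closedBall (0:ℚ_[p]) ((p:ℝ)^(-(k+1)))) := by
  rw [mr_cball_cover]
  rw [measure_biUnion_finset ?_ ?_]
  · rw [Finset.sum_congr (rfl : Finset.range p = Finset.range p)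
      (fun i _ => mr_meas_translate p μ ((i:ℚ_[p]) * (p:ℚ_[p])^k) ((p:ℝ)^(-(k+1))))]
    rw [Finset.sum_const, Finset.card_range, nsmul_eq_mul]
  · intro i hi j hj hij
    exact mr_cball_disj p k (Finset.mem_range.mp hi) (Finset.mem_range.mp hj) hij
  · intro i _
    exact measurableSet_closedBall

lemma mr_meas_ball (hμ : μ (closedBall (0:ℚ_[p]) ((p:ℝ)^(-(1:ℤ)))) = 1) (c : ℚ_[p]) (k : ℤ) :
    μ (closedBall c ((p:ℝ)^(-k))) = (p:ℝ≥0∞)^(1-k) := by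
  have hp0 : (p:ℝ≥0∞) ≠ 0 := by
    exact_mod_cast (Nat.cast_ne_zero (R := ℝ≥0∞)).mpr (Fact.out : p.Prime).ne_zero
  have hptop : (p:ℝ≥0∞) ≠ ⊤ := by exact ENNReal.natCast_ne_top p
  rw [mr_meas_translate]
  have up : ∀ n : ℕ, μ (closedBall (0:ℚ_[p]) ((p:ℝ)^(-(1 + n:ℤ)))) = (p:ℝ≥0∞)^(-(n:ℤ)) := by
    intro n
    induction n with
    | zero => simpa using hμ
    | succ n ih =>
        have hstep := mr_meas_step p μ (1 + n)
        rw [ih] at hstep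
        have : μ (closedBall (0:ℚ_[p]) ((p:ℝ)^(-(1 + n + 1:ℤ))))
            = (p:ℝ≥0∞)⁻¹ * ((p:ℝ≥0∞) * μ (closedBall (0:ℚ_[p]) ((p:ℝ)^(-(1 + n + 1:ℤ))))) := by
          rw [← mul_assoc, ENNReal.inv_mul_cancel hp0 hptop, one_mul]
        rw [show ((1 + (n+1:ℕ) :ℤ)) = (1 + n + 1 : ℤ) by push_cast; ring, this, ← hstep]
        rw [show (-(n+1:ℕ) : ℤ) = (-1) + (-(n:ℤ)) by push_cast; ring,
          ENNReal.zpow_add hp0 hptop]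
        congr 1
        rw [ENNReal.zpow_neg, zpow_one]
  have down : ∀ n : ℕ, μ (closedBall (0:ℚ_[p]) ((p:ℝ)^(-(1 - n:ℤ)))) = (p:ℝ≥0∞)^((n:ℤ)) := by
    intro n
    induction n with
    | zero => simpa using hμ
    | succ n ih =>
        have hstep := mr_meas_step p μ (1 - (n+1:ℕ))
        rw [show ((1 - (n+1:ℕ) + 1:ℤ)) = (1 - n : ℤ) by push_cast; ring, ih] at hstep
        rw [hstep, show ((n+1:ℕ) : ℤ) = 1 + (n:ℤ) by push_cast; ring,
          ENNReal.zpow_add hp0 hptop, zpow_one]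
  rcases le_total 1 k with h | h
  · have := up (k - 1).toNat
    rw [show (1 + ((k-1).toNat : ℤ) : ℤ) = k by omega] at this
    rw [this]
    congr 1
    omega
  · have := down (1 - k).toNat
    rw [show (1 - ((1-k).toNat : ℤ) : ℤ) = k by omega] at this
    rw [this]
    congr 1
    omega
end MRMeas

section Branch
variable (p : ℕ) [Fact p.Prime]

variable [MeasurableSpace ℚ_[p]] [BorelSpace ℚ_[p]]
variable (μ : Measure ℚ_[p]) [μ.IsAddHaarMeasure]


lemma mr_branch (hμ : μ (closedBall (0:ℚ_[p]) ((p:ℝ)^(-(1:ℤ)))) = 1)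
    (a : ℚ_[p]) (k n : ℤ) (hn : -k < n) (hnorm : ‖a‖ = (p:ℝ)^n)
    {B : Set ℚ_[p]} (hB : MeasurableSet B) (hBsub : B ⊆ closedBall 0 ((p:ℝ)^(-k))) :
    μ (closedBall a⁻¹ ((p:ℝ)^(-(k+2*n))) ∩ (fun x => x⁻¹ - a) ⁻¹' B)
      = (p:ℝ≥0∞)^(-(2*n)) * μ B := by
  have hp1R : (1:ℝ) < p := by exact_mod_cast (Fact.out : p.Prime).one_lt
  have hpR0 : (0:ℝ) < p := by positivity
  have hp0 : (p:ℝ≥0∞) ≠ 0 := by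
    exact_mod_cast (Nat.cast_ne_zero (R := ℝ≥0∞)).mpr (Fact.out : p.Prime).ne_zero
  have hptop : (p:ℝ≥0∞) ≠ ⊤ := ENNReal.natCast_ne_top p
  have ha0 : a ≠ 0 := by
    intro h
    rw [h, norm_zero] at hnorm
    have : (0:ℝ) < (p:ℝ)^n := by positivity
    linarith
  have hainv : ‖a⁻¹‖ = (p:ℝ)^(-n) := by rw [norm_inv, hnorm, ← zpow_neg]
  set E : Set ℚ_[p] := closedBall a⁻¹ ((p:ℝ)^(-(k+2*n))) with hEdef
  set T : Set ℚ_[p] := closedBall (0:ℚ_[p]) ((p:ℝ)^(-k)) with hTdef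
  set g : ℚ_[p] → ℚ_[p] := fun x => x⁻¹ - a with hgdef
  set h : ℚ_[p] → ℚ_[p] := fun y => (y + a)⁻¹ with hhdef
  have hgm : Measurable g := measurable_inv.sub_const a
  have hradlt : (p:ℝ)^(-(k+2*n)) < (p:ℝ)^(-n) :=
    (zpow_lt_zpow_iff_right₀ hp1R).mpr (by omega)
  -- norm of elements of E
  have hnormE : ∀ x ∈ E, ‖x‖ = (p:ℝ)^(-n) := by
    intro x hx
    rw [hEdef, mem_closedBall, dist_eq_norm] at hx
    have hne : ‖a⁻¹‖ ≠ ‖x - a⁻¹‖ := by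
      rw [hainv]
      exact ne_of_gt (lt_of_le_of_lt hx hradlt)
    calc ‖x‖ = ‖a⁻¹ + (x - a⁻¹)‖ := by ring_nf
      _ = max ‖a⁻¹‖ ‖x - a⁻¹‖ := Padic.add_eq_max_of_ne hne
      _ = ‖a⁻¹‖ := max_eq_left (le_of_lt (lt_of_le_of_lt hx (hainv ▸ hradlt)))
      _ = (p:ℝ)^(-n) := hainv
  have hne0E : ∀ x ∈ E, x ≠ 0 := by
    intro x hx h0
    have := hnormE x hx
    rw [h0, norm_zero] at this
    have : (0:ℝ) < (p:ℝ)^(-n) := by positivity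
    linarith
  -- scaled isometry
  have hgdist : ∀ x ∈ E, ∀ y ∈ E, ‖g x - g y‖ = (p:ℝ)^(2*n) * ‖x - y‖ := by
    intro x hx y hy
    have hx0 := hne0E x hx
    have hy0 := hne0E y hy
    have hid : g x - g y = (y - x) * x⁻¹ * y⁻¹ := by
      rw [hgdef]
      field_simp
      ring
    rw [hid, norm_mul, norm_mul, norm_inv, norm_inv, hnormE x hx, hnormE y hy,
      ← zpow_neg, neg_neg]
    rw [show ‖y - x‖ = ‖x - y‖ by rw [show y - x = -(x - y) by ring, norm_neg]]
    rw [mul_assoc, ← zpow_add₀ (ne_of_gt hpR0), mul_comm,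
      show n + n = 2*n by ring]
  -- g maps E to T
  have hgT : ∀ x ∈ E, g x ∈ T := by
    intro x hx
    have hx' := hx
    rw [hEdef, mem_closedBall, dist_eq_norm] at hx'
    have hga : g a⁻¹ = 0 := by rw [hgdef]; simp [ha0]
    have : ‖g x - g a⁻¹‖ = (p:ℝ)^(2*n) * ‖x - a⁻¹‖ :=
      hgdist x hx a⁻¹ (mem_closedBall_self (by positivity))
    rw [hga, sub_zero] at this
    rw [hTdef, mem_closedBall, dist_eq_norm, sub_zero, this]
    calc (p:ℝ)^(2*n) * ‖x - a⁻¹‖ ≤ (p:ℝ)^(2*n) * (p:ℝ)^(-(k+2*n)) := by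
          apply mul_le_mul_of_nonneg_left hx' (by positivity)
      _ = (p:ℝ)^(-k) := by
          rw [← zpow_add₀ (ne_of_gt hpR0)]
          congr 1
          ring
  -- h maps T to E and is a section of g
  have hhE : ∀ y ∈ T, h y ∈ E ∧ g (h y) = y := by
    intro y hy
    rw [hTdef, mem_closedBall, dist_eq_norm, sub_zero] at hy
    have hlt : ‖y‖ < ‖a‖ := by
      rw [hnorm]
      calc ‖y‖ ≤ (p:ℝ)^(-k) := hy
        _ < (p:ℝ)^n := (zpow_lt_zpow_iff_right₀ hp1R).mpr (by omega)
    have hya : ‖y + a‖ = (p:ℝ)^n := by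
      rw [Padic.add_eq_max_of_ne (ne_of_lt hlt), max_eq_right (le_of_lt hlt), hnorm]
    have hya0 : y + a ≠ 0 := by
      intro h0
      rw [h0, norm_zero] at hya
      have : (0:ℝ) < (p:ℝ)^n := by positivity
      linarith
    constructor
    · rw [hEdef, mem_closedBall, dist_eq_norm, hhdef]
      have hid : (y + a)⁻¹ - a⁻¹ = -y * (y+a)⁻¹ * a⁻¹ := by
        field_simp
        ring
      rw [hid, norm_mul, norm_mul, norm_neg, norm_inv, norm_inv, hya, hnorm, ← zpow_neg]
      calc ‖y‖ * (p:ℝ)^(-n) * (p:ℝ)^(-n) ≤ (p:ℝ)^(-k) * (p:ℝ)^(-n) * (p:ℝ)^(-n) := by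
            apply mul_le_mul_of_nonneg_right
              (mul_le_mul_of_nonneg_right hy (by positivity)) (by positivity)
        _ = (p:ℝ)^(-(k+2*n)) := by
            rw [← zpow_add₀ (ne_of_gt hpR0), ← zpow_add₀ (ne_of_gt hpR0)]
            congr 1
            ring
    · rw [hgdef, hhdef]
      simp only [inv_inv]
      ring
  have hhg : ∀ x ∈ E, h (g x) = x := by
    intro x hx
    have hx0 := hne0E x hx
    rw [hgdef, hhdef]
    simp [hx0]
  -- the mapped measure
  have hEfin : μ E < ⊤ := (isCompact_closedBall _ _).measure_lt_top
  set ν : Measure ℚ_[p] := Measure.map g (μ.restrict E) with hνdef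
  have hν_apply : ∀ {s : Set ℚ_[p]}, MeasurableSet s → ν s = μ (E ∩ g ⁻¹' s) := by
    intro s hs
    rw [hνdef, Measure.map_apply hgm hs, Measure.restrict_apply (hgm hs), Set.inter_comm]
  have hνfin : IsFiniteMeasure ν := by
    constructor
    rw [hν_apply MeasurableSet.univ]
    exact lt_of_le_of_lt (measure_mono (Set.inter_subset_left)) hEfin
  have hνball : ∀ c : ℚ_[p], ∀ m : ℤ,
      ν (closedBall c ((p:ℝ)^(-m))) =
        (p:ℝ≥0∞)^(-(2*n)) * (μ.restrict T) (closedBall c ((p:ℝ)^(-m))) := by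
    intro c m
    rw [hν_apply measurableSet_closedBall,
      Measure.restrict_apply measurableSet_closedBall]
    by_cases hem : closedBall c ((p:ℝ)^(-m)) ∩ T = ∅
    · rw [hem, measure_empty, mul_zero]
      convert measure_empty (μ := μ)
      rw [Set.eq_empty_iff_forall_notMem]
      rintro x ⟨hxE, hxs⟩
      exact Set.eq_empty_iff_forall_notMem.mp hem (g x) ⟨hxs, hgT x hxE⟩
    · obtain ⟨z, hzs, hzT⟩ := Set.nonempty_iff_ne_empty.mpr hem
      obtain ⟨hhzE, hghz⟩ := hhE z hzT
      by_cases hkm : k ≤ m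
      · -- small ball case : ball ⊆ T
        have hsub : closedBall c ((p:ℝ)^(-m)) ⊆ T := by
          rw [IsUltrametricDist.closedBall_eq_of_mem hzs, hTdef,
            IsUltrametricDist.closedBall_eq_of_mem (by rwa [← hTdef] : z ∈ closedBall (0:ℚ_[p]) ((p:ℝ)^(-k)))]
          exact closedBall_subset_closedBall ((zpow_le_zpow_iff_right₀ hp1R).mpr (by omega))
        have hinter : closedBall c ((p:ℝ)^(-m)) ∩ T = closedBall c ((p:ℝ)^(-m)) :=
          Set.inter_eq_self_of_subset_left hsub
        have hEg : E ∩ g ⁻¹' (closedBall c ((p:ℝ)^(-m))) = closedBall (h z) ((p:ℝ)^(-(m+2*n))) := by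
          rw [IsUltrametricDist.closedBall_eq_of_mem hzs]
          ext x
          simp only [Set.mem_inter_iff, Set.mem_preimage, mem_closedBall, dist_eq_norm]
          constructor
          · rintro ⟨hxE, hxz⟩
            have := hgdist x hxE (h z) hhzE
            rw [hghz] at this
            have h2 : (p:ℝ)^(2*n) * ‖x - h z‖ ≤ (p:ℝ)^(-m) := this ▸ hxz
            calc ‖x - h z‖ ≤ (p:ℝ)^(-m) / (p:ℝ)^(2*n) := by
                  rw [le_div_iff₀ (by positivity : (0:ℝ) < (p:ℝ)^(2*n))]
                  linarith [h2]
              _ = (p:ℝ)^(-(m+2*n)) := by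
                  rw [div_eq_mul_inv, ← zpow_neg, ← zpow_add₀ (ne_of_gt hpR0)]
                  congr 1
                  ring
          · intro hxz
            have hxE : x ∈ E := by
              have h1 : E = closedBall (h z) ((p:ℝ)^(-(k+2*n))) :=
                IsUltrametricDist.closedBall_eq_of_mem hhzE
              rw [h1, mem_closedBall, dist_eq_norm]
              calc ‖x - h z‖ ≤ (p:ℝ)^(-(m+2*n)) := hxz
                _ ≤ (p:ℝ)^(-(k+2*n)) := (zpow_le_zpow_iff_right₀ hp1R).mpr (by omega)
            refine ⟨hxE, ?_⟩
            have := hgdist x hxE (h z) hhzE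
            rw [hghz] at this
            rw [this]
            calc (p:ℝ)^(2*n) * ‖x - h z‖ ≤ (p:ℝ)^(2*n) * (p:ℝ)^(-(m+2*n)) := by
                  apply mul_le_mul_of_nonneg_left hxz (by positivity)
              _ = (p:ℝ)^(-m) := by
                  rw [← zpow_add₀ (ne_of_gt hpR0)]
                  congr 1
                  ring
        rw [hinter, hEg, mr_meas_ball p μ hμ, mr_meas_ball p μ hμ,
          show (1 - (m+2*n) : ℤ) = (-(2*n)) + (1 - m) by ring, ENNReal.zpow_add hp0 hptop]
      · -- big ball case : T ⊆ ball
        push_neg at hkm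
        have hsub : T ⊆ closedBall c ((p:ℝ)^(-m)) := by
          rw [IsUltrametricDist.closedBall_eq_of_mem hzs, hTdef,
            IsUltrametricDist.closedBall_eq_of_mem (by rwa [← hTdef] : z ∈ closedBall (0:ℚ_[p]) ((p:ℝ)^(-k)))]
          exact closedBall_subset_closedBall ((zpow_le_zpow_iff_right₀ hp1R).mpr (by omega))
        have hinter : closedBall c ((p:ℝ)^(-m)) ∩ T = T :=
          Set.inter_eq_self_of_subset_right hsub
        have hEg : E ∩ g ⁻¹' (closedBall c ((p:ℝ)^(-m))) = E := by
          apply Set.inter_eq_self_of_subset_left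
          intro x hxE
          exact hsub (hgT x hxE)
        rw [hinter, hEg, hEdef, hTdef, mr_meas_ball p μ hμ, mr_meas_ball p μ hμ,
          show (1 - (k+2*n) : ℤ) = (-(2*n)) + (1 - k) by ring, ENNReal.zpow_add hp0 hptop]
  have hext : ν = ((p:ℝ≥0∞)^(-(2*n))) • μ.restrict T := by
    refine ext_of_generate_finite
      {S : Set ℚ_[p] | ∃ c : ℚ_[p], ∃ m : ℤ, S = closedBall c ((p:ℝ)^(-m))}
      ?_ (mr_isPiSystem p) ?_ ?_
    · rw [BorelSpace.measurable_eq (α := ℚ_[p])]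
      exact (mr_isBasis p).borel_eq_generateFrom
    · rintro s ⟨c, m, rfl⟩
      rw [Measure.smul_apply, smul_eq_mul]
      exact hνball c m
    · rw [hν_apply MeasurableSet.univ, Measure.smul_apply, smul_eq_mul,
        Measure.restrict_apply MeasurableSet.univ]
      simp only [Set.preimage_univ, Set.inter_univ, Set.univ_inter]
      rw [hEdef, hTdef, mr_meas_ball p μ hμ, mr_meas_ball p μ hμ,
        show (1 - (k+2*n) : ℤ) = (-(2*n)) + (1 - k) by ring, ENNReal.zpow_add hp0 hptop]
  have := hν_apply hB
  rw [hext] at this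
  rw [← this, Measure.smul_apply, smul_eq_mul, Measure.restrict_apply hB,
    Set.inter_eq_self_of_subset_left hBsub]
end Branch


section MRFloorMeas
open Metric
variable (p : ℕ) [Fact p.Prime]

lemma tFloor_locally_const (hodd : Odd p) (x y : ℚ_[p]) (h : ‖y - x‖ ≤ (p:ℝ)^(-(0:ℤ))) :
    tFloor p y = tFloor p x := by
  apply tFloor_eq p hodd
  obtain ⟨h1, h2, h3⟩ := (isTFloor_iff p x _).mp (isTFloor_tFloor p hodd x)
  refine (isTFloor_iff p _ _).mpr ⟨h1, h2, ?_⟩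
  have hsplit : y - ((tFloor p x : ℚ) : ℚ_[p]) = (x - ((tFloor p x : ℚ) : ℚ_[p])) + (y - x) := by
    ring
  rw [hsplit]
  exact le_trans (Padic.nonarchimedean _ _) (max_le h3 h)

lemma sFloor_locally_const (hodd : Odd p) (x y : ℚ_[p]) (h : ‖y - x‖ ≤ (p:ℝ)^(-(1:ℤ))) :
    sFloor p y = sFloor p x := by
  apply sFloor_eq p hodd
  obtain ⟨h1, h2, h3⟩ := (isSFloor_iff p x _).mp (isSFloor_sFloor p hodd x)
  refine (isSFloor_iff p _ _).mpr ⟨h1, h2, ?_⟩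
  have hsplit : y - ((sFloor p x : ℚ) : ℚ_[p]) = (x - ((sFloor p x : ℚ) : ℚ_[p])) + (y - x) := by
    ring
  rw [hsplit]
  exact le_trans (Padic.nonarchimedean _ _) (max_le h3 h)

variable [MeasurableSpace ℚ_[p]] [BorelSpace ℚ_[p]]

lemma measurable_tFloorCast (hodd : Odd p) :
    Measurable (fun x : ℚ_[p] => ((tFloor p x : ℚ) : ℚ_[p])) := by
  have hpR0 : (0:ℝ) < p := by exact_mod_cast (Fact.out : p.Prime).pos
  apply Continuous.measurable
  rw [continuous_iff_continuousAt]
  intro x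
  have hev : (fun y : ℚ_[p] => ((tFloor p y : ℚ) : ℚ_[p]))
      =ᶠ[nhds x] (fun _ => ((tFloor p x : ℚ) : ℚ_[p])) := by
    filter_upwards [Metric.closedBall_mem_nhds x (by positivity : (0:ℝ) < (p:ℝ)^(-(0:ℤ)))]
      with y hy
    rw [tFloor_locally_const p hodd x y (by rwa [mem_closedBall, dist_eq_norm] at hy)]
  exact ContinuousAt.congr continuousAt_const hev.symm

lemma measurable_sFloorCast (hodd : Odd p) :
    Measurable (fun x : ℚ_[p] => ((sFloor p x : ℚ) : ℚ_[p])) := by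
  have hpR0 : (0:ℝ) < p := by exact_mod_cast (Fact.out : p.Prime).pos
  apply Continuous.measurable
  rw [continuous_iff_continuousAt]
  intro x
  have hev : (fun y : ℚ_[p] => ((sFloor p y : ℚ) : ℚ_[p]))
      =ᶠ[nhds x] (fun _ => ((sFloor p x : ℚ) : ℚ_[p])) := by
    filter_upwards [Metric.closedBall_mem_nhds x (by positivity : (0:ℝ) < (p:ℝ)^(-(1:ℤ)))]
      with y hy
    rw [sFloor_locally_const p hodd x y (by rwa [mem_closedBall, dist_eq_norm] at hy)]
  exact ContinuousAt.congr continuousAt_const hev.symm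

lemma measurable_Tt (hodd : Odd p) : Measurable (Tt p) :=
  measurable_inv.sub ((measurable_tFloorCast p hodd).comp measurable_inv)

lemma measurable_Ts (hodd : Odd p) : Measurable (Ts p) :=
  measurable_inv.sub ((measurable_sFloorCast p hodd).comp measurable_inv)

lemma measurable_Tmap (hodd : Odd p) : Measurable (Tmap p) :=
  (measurable_Ts p hodd).comp (measurable_Tt p hodd)

end MRFloorMeas


section MRGauss
open scoped ENNReal
open Metric
variable (p : ℕ) [Fact p.Prime] [MeasurableSpace ℚ_[p]] [BorelSpace ℚ_[p]]
variable (μ : Measure ℚ_[p]) [μ.IsAddHaarMeasure]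

lemma mr_gauss (hμ : μ (closedBall (0:ℚ_[p]) ((p:ℝ)^(-(1:ℤ)))) = 1)
    (j d : ℕ) (hdj : d + j = 1) (F : ℚ_[p] → ℚ)
    (hF : ∀ α : ℚ_[p], InZinvp p (F α) ∧ |F α| < (p:ℚ)^j/2 ∧
      ‖α - ((F α : ℚ):ℚ_[p])‖ ≤ (p:ℝ)^(-(j:ℤ)))
    (hFeq : ∀ (α : ℚ_[p]) (a : ℚ), InZinvp p a → |a| < (p:ℚ)^j/2 →
      ‖α - (a:ℚ_[p])‖ ≤ (p:ℝ)^(-(j:ℤ)) → F α = a)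
    {B : Set ℚ_[p]} (hB : MeasurableSet B) (hBsub : B ⊆ closedBall 0 ((p:ℝ)^(-(j:ℤ)))) :
    μ (closedBall 0 ((p:ℝ)^(-(d:ℤ))) ∩ (fun x : ℚ_[p] => x⁻¹ - ((F x⁻¹ : ℚ) : ℚ_[p])) ⁻¹' B)
      = (p:ℝ≥0∞)^(2*(j:ℤ)-1) * μ B := by
  have hp1R : (1:ℝ) < p := by exact_mod_cast (Fact.out : p.Prime).one_lt
  have hpR0 : (0:ℝ) < p := by positivity
  have hp0 : (p:ℝ≥0∞) ≠ 0 := by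
    exact_mod_cast (Nat.cast_ne_zero (R := ℝ≥0∞)).mpr (Fact.out : p.Prime).ne_zero
  have hptop : (p:ℝ≥0∞) ≠ ⊤ := ENNReal.natCast_ne_top p
  set G : ℚ_[p] → ℚ_[p] := fun x => x⁻¹ - ((F x⁻¹ : ℚ) : ℚ_[p]) with hGdef
  set nA : ℚ_[p] → ℤ := fun a => -(a.valuation) with hnAdef
  set E : ℚ_[p] → Set ℚ_[p] := fun a => closedBall a⁻¹ ((p:ℝ)^(-((j:ℤ) + 2 * nA a)))
    with hEdef
  set S : Set ℚ_[p] :=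
    {a : ℚ_[p] | (∃ q : ℚ, a = (q:ℚ_[p]) ∧ InZinvp p q ∧ |q| < (p:ℚ)^j/2) ∧
      (p:ℝ)^(d:ℤ) ≤ ‖a‖} with hSdef
  -- basic facts about members of S
  have hSne : ∀ a ∈ S, a ≠ 0 := by
    rintro a ⟨_, hnorm⟩ rfl
    rw [norm_zero] at hnorm
    have : (0:ℝ) < (p:ℝ)^(d:ℤ) := by positivity
    linarith
  have hSnorm : ∀ a ∈ S, ‖a‖ = (p:ℝ)^(nA a) := by
    intro a ha
    rw [hnAdef, Padic.norm_eq_zpow_neg_valuation (hSne a ha)]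
  have hSd : ∀ a ∈ S, (d:ℤ) ≤ nA a := by
    rintro a ha
    have h1 : (p:ℝ)^(d:ℤ) ≤ (p:ℝ)^(nA a) := by
      rw [← hSnorm a ha]; exact ha.2
    exact (zpow_le_zpow_iff_right₀ hp1R).mp h1
  have hSj : ∀ a ∈ S, -(j:ℤ) < nA a := by
    intro a ha
    have := hSd a ha
    omega
  -- elements of E a
  have hEnorm : ∀ a ∈ S, ∀ x ∈ E a, ‖x‖ = (p:ℝ)^(-(nA a)) := by
    intro a ha x hx
    rw [hEdef, mem_closedBall, dist_eq_norm] at hx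
    have hainv : ‖a⁻¹‖ = (p:ℝ)^(-(nA a)) := by
      rw [norm_inv, hSnorm a ha, ← zpow_neg]
    have hlt : ‖x - a⁻¹‖ < ‖a⁻¹‖ := by
      rw [hainv]
      calc ‖x - a⁻¹‖ ≤ (p:ℝ)^(-((j:ℤ) + 2 * nA a)) := hx
        _ < (p:ℝ)^(-(nA a)) := by
            apply (zpow_lt_zpow_iff_right₀ hp1R).mpr
            have := hSj a ha
            omega
    calc ‖x‖ = ‖a⁻¹ + (x - a⁻¹)‖ := by ring_nf
      _ = max ‖a⁻¹‖ ‖x - a⁻¹‖ := Padic.add_eq_max_of_ne (ne_of_gt hlt)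
      _ = ‖a⁻¹‖ := max_eq_left hlt.le
      _ = (p:ℝ)^(-(nA a)) := hainv
  have hEne : ∀ a ∈ S, ∀ x ∈ E a, x ≠ 0 := by
    intro a ha x hx h0
    have := hEnorm a ha x hx
    rw [h0, norm_zero] at this
    have h2 : (0:ℝ) < (p:ℝ)^(-(nA a)) := by positivity
    linarith
  have hEdom : ∀ a ∈ S, E a ⊆ closedBall 0 ((p:ℝ)^(-(d:ℤ))) := by
    intro a ha x hx
    rw [mem_closedBall, dist_eq_norm, sub_zero, hEnorm a ha x hx]
    apply (zpow_le_zpow_iff_right₀ hp1R).mpr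
    have := hSd a ha
    omega
  -- norm identity : for x ∈ E a, ‖x⁻¹ - a‖ ≤ p^{-j}
  have hEinv : ∀ a ∈ S, ∀ x ∈ E a, ‖x⁻¹ - a‖ ≤ (p:ℝ)^(-(j:ℤ)) := by
    intro a ha x hx
    have hx0 := hEne a ha x hx
    have ha0 := hSne a ha
    have hid : x⁻¹ - a = (a⁻¹ - x) * a * x⁻¹ := by
      field_simp
    have hx' : ‖x - a⁻¹‖ ≤ (p:ℝ)^(-((j:ℤ) + 2 * nA a)) := by
      rw [hEdef, mem_closedBall, dist_eq_norm] at hx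
      exact hx
    rw [hid, norm_mul, norm_mul, norm_inv, hEnorm a ha x hx, hSnorm a ha,
      show ‖a⁻¹ - x‖ = ‖x - a⁻¹‖ by rw [show a⁻¹ - x = -(x - a⁻¹) by ring, norm_neg]]
    rw [← zpow_neg, neg_neg]
    calc ‖x - a⁻¹‖ * (p:ℝ)^(nA a) * (p:ℝ)^(nA a)
        ≤ (p:ℝ)^(-((j:ℤ) + 2 * nA a)) * (p:ℝ)^(nA a) * (p:ℝ)^(nA a) := by
          apply mul_le_mul_of_nonneg_right
            (mul_le_mul_of_nonneg_right hx' (by positivity)) (by positivity)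
      _ = (p:ℝ)^(-(j:ℤ)) := by
          rw [mul_assoc, ← zpow_add₀ (ne_of_gt hpR0), ← zpow_add₀ (ne_of_gt hpR0)]
          congr 1
          ring
  -- identification : on E a, F x⁻¹ = the rational giving a
  have hEF : ∀ a ∈ S, ∀ x ∈ E a, ((F x⁻¹ : ℚ) : ℚ_[p]) = a := by
    intro a ha x hx
    obtain ⟨⟨q, hq, hq1, hq2⟩, -⟩ := id ha
    subst hq
    rw [hFeq x⁻¹ q hq1 hq2 (hEinv _ ha x hx)]
  -- G agrees with the branch map on E a
  have hEG : ∀ a ∈ S, ∀ x ∈ E a, G x = x⁻¹ - a := by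
    intro a ha x hx
    rw [hGdef]
    simp only
    rw [hEF a ha x hx]
  -- coverage
  have hcov : ∀ x : ℚ_[p], x ∈ closedBall 0 ((p:ℝ)^(-(d:ℤ))) → x ≠ 0 →
      ((F x⁻¹ : ℚ) : ℚ_[p]) ∈ S ∧ x ∈ E ((F x⁻¹ : ℚ) : ℚ_[p]) := by
    intro x hx hx0
    rw [mem_closedBall, dist_eq_norm, sub_zero] at hx
    obtain ⟨hq1, hq2, hq3⟩ := hF x⁻¹
    have hxnorm : (0:ℝ) < ‖x‖ := norm_pos_iff.mpr hx0
    have hxinv : (p:ℝ)^(d:ℤ) ≤ ‖x⁻¹‖ := by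
      rw [norm_inv]
      rw [le_inv_comm₀ (by positivity) hxnorm]
      rwa [← zpow_neg]
    have hjd : (p:ℝ)^(-(j:ℤ)) < (p:ℝ)^(d:ℤ) := by
      apply (zpow_lt_zpow_iff_right₀ hp1R).mpr
      omega
    have hanorm : ‖((F x⁻¹ : ℚ) : ℚ_[p])‖ = ‖x⁻¹‖ := by
      have hlt : ‖x⁻¹ - ((F x⁻¹ : ℚ) : ℚ_[p])‖ < ‖x⁻¹‖ :=
        lt_of_le_of_lt hq3 (lt_of_lt_of_le hjd hxinv)
      calc ‖((F x⁻¹ : ℚ) : ℚ_[p])‖ = ‖x⁻¹ + -(x⁻¹ - ((F x⁻¹ : ℚ) : ℚ_[p]))‖ := by ring_nf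
        _ = max ‖x⁻¹‖ ‖-(x⁻¹ - ((F x⁻¹ : ℚ) : ℚ_[p]))‖ := by
            apply Padic.add_eq_max_of_ne
            rw [norm_neg]
            exact ne_of_gt hlt
        _ = ‖x⁻¹‖ := by rw [norm_neg]; exact max_eq_left hlt.le
    have haS : ((F x⁻¹ : ℚ) : ℚ_[p]) ∈ S := by
      refine ⟨⟨F x⁻¹, rfl, hq1, hq2⟩, ?_⟩
      rw [hanorm]
      exact hxinv
    refine ⟨haS, ?_⟩
    -- x ∈ E a
    set a := ((F x⁻¹ : ℚ) : ℚ_[p]) with hadef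
    have ha0 := hSne a haS
    have hxa : ‖x‖ = (p:ℝ)^(-(nA a)) := by
      have h1 : ‖x⁻¹‖ = (p:ℝ)^(nA a) := by rw [← hanorm, hSnorm a haS]
      rw [norm_inv] at h1
      rw [← inv_inv ‖x‖, h1, ← zpow_neg]
    have hid : x - a⁻¹ = (a - x⁻¹) * x * a⁻¹ := by
      field_simp
    rw [hEdef, mem_closedBall, dist_eq_norm, hid, norm_mul, norm_mul, norm_inv,
      hSnorm a haS, hxa,
      show ‖a - x⁻¹‖ = ‖x⁻¹ - a‖ by rw [show a - x⁻¹ = -(x⁻¹ - a) by ring, norm_neg]]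
    rw [← zpow_neg]
    calc ‖x⁻¹ - a‖ * (p:ℝ)^(-(nA a)) * (p:ℝ)^(-(nA a))
        ≤ (p:ℝ)^(-(j:ℤ)) * (p:ℝ)^(-(nA a)) * (p:ℝ)^(-(nA a)) := by
          apply mul_le_mul_of_nonneg_right
            (mul_le_mul_of_nonneg_right hq3 (by positivity)) (by positivity)
      _ = (p:ℝ)^(-((j:ℤ) + 2 * nA a)) := by
          rw [mul_assoc, ← zpow_add₀ (ne_of_gt hpR0), ← zpow_add₀ (ne_of_gt hpR0)]
          congr 1
          ring
  -- disjointness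
  have hdisj : S.PairwiseDisjoint (fun a => E a ∩ (fun x => x⁻¹ - a) ⁻¹' B) := by
    intro a ha b hb hab
    rw [Function.onFun, Set.disjoint_left]
    rintro x ⟨hxa, _⟩ ⟨hxb, _⟩
    exact hab (by rw [← hEF a ha x hxa, ← hEF b hb x hxb])
  have hdisjE : S.PairwiseDisjoint E := by
    intro a ha b hb hab
    rw [Function.onFun, Set.disjoint_left]
    rintro x hxa hxb
    exact hab (by rw [← hEF a ha x hxa, ← hEF b hb x hxb])
  -- countability
  have hScount : S.Countable := by
    apply Set.Countable.mono _ (Set.countable_range ((↑) : ℚ → ℚ_[p]))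
    rintro a ⟨⟨q, rfl, _, _⟩, _⟩
    exact ⟨q, rfl⟩
  -- measure of each piece
  have hpiece : ∀ a ∈ S, μ (E a ∩ (fun x => x⁻¹ - a) ⁻¹' B)
      = (p:ℝ≥0∞)^((j:ℤ)-1) * μ (E a) * μ B := by
    intro a ha
    have hbr := mr_branch p μ hμ a (j:ℤ) (nA a) (hSj a ha) (hSnorm a ha) hB hBsub
    rw [hEdef]
    rw [hbr, mr_meas_ball p μ hμ a⁻¹ ((j:ℤ) + 2 * nA a),
      ← ENNReal.zpow_add hp0 hptop,
      show (-(2 * nA a) : ℤ) = ((j:ℤ)-1) + (1 - ((j:ℤ) + 2 * nA a)) from by ring]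
  -- decomposition of the domain
  have hUnionB : (closedBall (0:ℚ_[p]) ((p:ℝ)^(-(d:ℤ))) ∩ G ⁻¹' B) \ {0}
      = ⋃ a ∈ S, (E a ∩ (fun x => x⁻¹ - a) ⁻¹' B) := by
    ext x
    simp only [Set.mem_diff, Set.mem_inter_iff, Set.mem_preimage, Set.mem_singleton_iff,
      Set.mem_iUnion, exists_prop]
    constructor
    · rintro ⟨⟨hx1, hx2⟩, hx3⟩
      obtain ⟨haS, hxE⟩ := hcov x hx1 hx3
      refine ⟨((F x⁻¹ : ℚ) : ℚ_[p]), haS, hxE, ?_⟩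
      rw [← hEG _ haS x hxE]
      exact hx2
    · rintro ⟨a, haS, hxE, hxB⟩
      refine ⟨⟨hEdom a haS hxE, ?_⟩, hEne a haS x hxE⟩
      rw [hEG a haS x hxE]
      exact hxB
  have hUnionE : closedBall (0:ℚ_[p]) ((p:ℝ)^(-(d:ℤ))) \ {0} = ⋃ a ∈ S, E a := by
    ext x
    simp only [Set.mem_diff, Set.mem_singleton_iff, Set.mem_iUnion, exists_prop]
    constructor
    · rintro ⟨hx1, hx3⟩
      obtain ⟨haS, hxE⟩ := hcov x hx1 hx3
      exact ⟨_, haS, hxE⟩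
    · rintro ⟨a, haS, hxE⟩
      exact ⟨hEdom a haS hxE, hEne a haS x hxE⟩
  -- measurability of pieces
  have hmeasp : ∀ a ∈ S, MeasurableSet (E a ∩ (fun x : ℚ_[p] => x⁻¹ - a) ⁻¹' B) := by
    intro a _
    exact measurableSet_closedBall.inter ((measurable_inv.sub_const a) hB)
  -- compute
  have h0null : μ ({0} : Set ℚ_[p]) = 0 := measure_singleton 0
  have hmain : μ (closedBall 0 ((p:ℝ)^(-(d:ℤ))) ∩ G ⁻¹' B)
      = ∑' (a : S), μ (E a ∩ (fun x => x⁻¹ - (a:ℚ_[p])) ⁻¹' B) := by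
    rw [← measure_diff_null
      (s := closedBall (0:ℚ_[p]) ((p:ℝ)^(-(d:ℤ))) ∩ G ⁻¹' B) h0null, hUnionB]
    exact measure_biUnion hScount hdisj hmeasp
  have hEsum : ∑' (a : S), μ (E a) = (p:ℝ≥0∞)^(1-(d:ℤ)) := by
    rw [← measure_biUnion hScount hdisjE (fun a _ => measurableSet_closedBall), ← hUnionE,
      measure_diff_null h0null, mr_meas_ball p μ hμ 0 (d:ℤ)]
  rw [hmain]
  calc ∑' (a : S), μ (E a ∩ (fun x => x⁻¹ - (a:ℚ_[p])) ⁻¹' B)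
      = ∑' (a : S), (p:ℝ≥0∞)^((j:ℤ)-1) * μ (E a) * μ B := by
        apply tsum_congr
        rintro ⟨a, haS⟩
        exact hpiece a haS
    _ = ((p:ℝ≥0∞)^((j:ℤ)-1) * ∑' (a : S), μ (E a)) * μ B := by
        rw [ENNReal.tsum_mul_right, ENNReal.tsum_mul_left]
    _ = (p:ℝ≥0∞)^(2*(j:ℤ)-1) * μ B := by
        rw [hEsum, ← ENNReal.zpow_add hp0 hptop]
        congr 2
        omega

end MRGauss


section MRFinal
open scoped ENNReal
open Metric
variable (p : ℕ) [Fact p.Prime]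

lemma mr_rat_of_finite (α : ℚ_[p]) (n : ℕ)
    (h : mrCQ p α n ∈ Set.range ((↑) : ℚ → ℚ_[p])) :
    α ∈ Set.range ((↑) : ℚ → ℚ_[p]) := by
  induction n with
  | zero => exact h
  | succ n ih =>
      apply ih
      by_cases hc : mrCQ p α n = ((mrFloor p n (mrCQ p α n) : ℚ) : ℚ_[p])
      · exact ⟨_, hc.symm⟩
      · obtain ⟨q, hq⟩ := h
        have hne : mrCQ p α n - ((mrFloor p n (mrCQ p α n) : ℚ) : ℚ_[p]) ≠ 0 :=
          sub_ne_zero.mpr hc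
        have h1 : mrCQ p α (n+1) = (mrCQ p α n - ((mrFloor p n (mrCQ p α n) : ℚ) : ℚ_[p]))⁻¹ :=
          rfl
        have h2 : mrCQ p α n = ((mrFloor p n (mrCQ p α n) : ℚ) : ℚ_[p]) + (mrCQ p α (n+1))⁻¹ := by
          rw [h1, inv_inv]
          ring
        refine ⟨mrFloor p n (mrCQ p α n) + q⁻¹, ?_⟩
        have h3 : ((mrFloor p n (mrCQ p α n) + q⁻¹ : ℚ) : ℚ_[p])
            = ((mrFloor p n (mrCQ p α n) : ℚ) : ℚ_[p]) + ((q:ℚ_[p]))⁻¹ := by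
          push_cast
          ring
        rw [h3, hq]
        exact h2.symm

lemma mr_not_infinite_countable : {α : ℚ_[p] | ¬ MRInfinite p α}.Countable := by
  apply Set.Countable.mono _ (Set.countable_range ((↑) : ℚ → ℚ_[p]))
  intro α hα
  rw [Set.mem_setOf_eq, MRInfinite] at hα
  push_neg at hα
  obtain ⟨n, hn⟩ := hα
  exact mr_rat_of_finite p α n ⟨mrPQ p α n, hn.symm⟩

lemma mr_Tt_mem (hodd : Odd p) (x : ℚ_[p]) : ‖Tt p x‖ ≤ (p:ℝ)^(-(0:ℤ)) :=
  ((isTFloor_iff p x⁻¹ _).mp (isTFloor_tFloor p hodd x⁻¹)).2.2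

end MRFinal

/-- the shift map `T = T_s ∘ T_t`, defined on the set
`D ⊆ pℤ_p` of elements with infinite MR expansion, preserves the Haar measure `μ`:
for every Borel set `A ⊆ pℤ_p`, `μ(T⁻¹(A)) = μ(A)`. -/
theorem stmt17 (p : ℕ) [Fact p.Prime] (hp : Odd p)
    [MeasurableSpace ℚ_[p]] [BorelSpace ℚ_[p]]
    (μ : Measure ℚ_[p]) [μ.IsAddHaarMeasure]
    (hμ : μ {α : ℚ_[p] | 1 ≤ vp p α} = 1)
    (D : Set ℚ_[p]) (hD : D = {α : ℚ_[p] | 1 ≤ vp p α ∧ MRInfinite p α})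
    (A : Set ℚ_[p]) (hA : MeasurableSet A) (hAsub : A ⊆ {α : ℚ_[p] | 1 ≤ vp p α}) :
    μ (D ∩ Tmap p ⁻¹' A) = μ A := by
  have hp0 : (p:ℝ≥0∞) ≠ 0 := by
    exact_mod_cast (Nat.cast_ne_zero (R := ℝ≥0∞)).mpr (Fact.out : p.Prime).ne_zero
  have hptop : (p:ℝ≥0∞) ≠ ⊤ := ENNReal.natCast_ne_top p
  -- identify `pℤ_p` with a closed ball
  have hpZ : {α : ℚ_[p] | 1 ≤ vp p α} = Metric.closedBall 0 ((p:ℝ)^(-(1:ℤ))) := by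
    ext x
    rw [Set.mem_setOf_eq, Metric.mem_closedBall, dist_eq_norm, sub_zero]
    exact vp_le_iff p x 1
  have hμ' : μ (Metric.closedBall (0:ℚ_[p]) ((p:ℝ)^(-(1:ℤ)))) = 1 := by
    rw [← hpZ]; exact hμ
  have hAsub' : A ⊆ Metric.closedBall 0 ((p:ℝ)^(-((1:ℕ):ℤ))) := by
    intro x hx
    have := hAsub hx
    rw [hpZ] at this
    simpa using this
  -- Step 0 : the non-infinite part is null
  have hNnull : μ {α : ℚ_[p] | ¬ MRInfinite p α} = 0 :=
    (mr_not_infinite_countable p).measure_zero μ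
  have hstep0 : μ (D ∩ Tmap p ⁻¹' A)
      = μ (Metric.closedBall 0 ((p:ℝ)^(-(1:ℤ))) ∩ Tmap p ⁻¹' A) := by
    apply le_antisymm
    · apply measure_mono
      rintro x ⟨hx1, hx2⟩
      refine ⟨?_, hx2⟩
      rw [hD] at hx1
      rw [← hpZ]
      exact hx1.1
    · have hsub : Metric.closedBall 0 ((p:ℝ)^(-(1:ℤ))) ∩ Tmap p ⁻¹' A
          ⊆ (D ∩ Tmap p ⁻¹' A) ∪ {α : ℚ_[p] | ¬ MRInfinite p α} := by
        rintro x ⟨hx1, hx2⟩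
        by_cases hm : MRInfinite p x
        · exact Or.inl ⟨by rw [hD]; exact ⟨(Set.ext_iff.mp hpZ x).mpr hx1, hm⟩, hx2⟩
        · exact Or.inr hm
      calc μ (Metric.closedBall 0 ((p:ℝ)^(-(1:ℤ))) ∩ Tmap p ⁻¹' A)
          ≤ μ ((D ∩ Tmap p ⁻¹' A) ∪ {α : ℚ_[p] | ¬ MRInfinite p α}) := measure_mono hsub
        _ ≤ μ (D ∩ Tmap p ⁻¹' A) + μ {α : ℚ_[p] | ¬ MRInfinite p α} := measure_union_le _ _
        _ = μ (D ∩ Tmap p ⁻¹' A) := by rw [hNnull, add_zero]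
  -- floor hypotheses for the generic lemma
  have hF_t : ∀ α : ℚ_[p], InZinvp p (tFloor p α) ∧ |tFloor p α| < (p:ℚ)^(0:ℕ)/2 ∧
      ‖α - ((tFloor p α : ℚ):ℚ_[p])‖ ≤ (p:ℝ)^(-((0:ℕ):ℤ)) := by
    intro α
    obtain ⟨h1, h2, h3⟩ := (isTFloor_iff p α _).mp (isTFloor_tFloor p hp α)
    exact ⟨h1, by simpa using h2, by simpa using h3⟩
  have hFeq_t : ∀ (α : ℚ_[p]) (a : ℚ), InZinvp p a → |a| < (p:ℚ)^(0:ℕ)/2 →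
      ‖α - (a:ℚ_[p])‖ ≤ (p:ℝ)^(-((0:ℕ):ℤ)) → tFloor p α = a := by
    intro α a h1 h2 h3
    exact tFloor_eq p hp ((isTFloor_iff p α a).mpr ⟨h1, by simpa using h2, by simpa using h3⟩)
  have hF_s : ∀ α : ℚ_[p], InZinvp p (sFloor p α) ∧ |sFloor p α| < (p:ℚ)^(1:ℕ)/2 ∧
      ‖α - ((sFloor p α : ℚ):ℚ_[p])‖ ≤ (p:ℝ)^(-((1:ℕ):ℤ)) := by
    intro α
    obtain ⟨h1, h2, h3⟩ := (isSFloor_iff p α _).mp (isSFloor_sFloor p hp α)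
    exact ⟨h1, h2, by simpa using h3⟩
  have hFeq_s : ∀ (α : ℚ_[p]) (a : ℚ), InZinvp p a → |a| < (p:ℚ)^(1:ℕ)/2 →
      ‖α - (a:ℚ_[p])‖ ≤ (p:ℝ)^(-((1:ℕ):ℤ)) → sFloor p α = a := by
    intro α a h1 h2 h3
    exact sFloor_eq p hp ((isSFloor_iff p α a).mpr ⟨h1, h2, by simpa using h3⟩)
  -- the inner (s) step
  set B₀ : Set ℚ_[p] := Metric.closedBall 0 ((p:ℝ)^(-((0:ℕ):ℤ))) ∩ Ts p ⁻¹' A with hB₀def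
  have hB₀meas : MeasurableSet B₀ :=
    measurableSet_closedBall.inter ((measurable_Ts p hp) hA)
  have hTs_eq : (fun x : ℚ_[p] => x⁻¹ - ((sFloor p x⁻¹ : ℚ) : ℚ_[p])) = Ts p := rfl
  have hTt_eq : (fun x : ℚ_[p] => x⁻¹ - ((tFloor p x⁻¹ : ℚ) : ℚ_[p])) = Tt p := rfl
  have hgaussS := mr_gauss p μ hμ' 1 0 (by norm_num) (sFloor p) hF_s hFeq_s hA hAsub'
  rw [hTs_eq] at hgaussS
  have hgaussT := mr_gauss p μ hμ' 0 1 (by norm_num) (tFloor p) hF_t hFeq_t hB₀meas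
    (Set.inter_subset_left)
  rw [hTt_eq] at hgaussT
  -- Step 1 : rewrite the two-step preimage
  have hstep1 : Metric.closedBall 0 ((p:ℝ)^(-(1:ℤ))) ∩ Tmap p ⁻¹' A
      = Metric.closedBall 0 ((p:ℝ)^(-((1:ℕ):ℤ))) ∩ Tt p ⁻¹' B₀ := by
    ext x
    simp only [Set.mem_inter_iff, Set.mem_preimage, hB₀def, Metric.mem_closedBall,
      dist_eq_norm, sub_zero]
    constructor
    · rintro ⟨h1, h2⟩
      exact ⟨by simpa using h1, ⟨by simpa using mr_Tt_mem p hp x, h2⟩⟩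
    · rintro ⟨h1, h2, h3⟩
      exact ⟨by simpa using h1, h3⟩
  rw [hstep0, hstep1, hgaussT, hB₀def, hgaussS, ← mul_assoc, ← ENNReal.zpow_add hp0 hptop]
  norm_num
end
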